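/- arXiv:2012.11659 — 2 statements merged into one kernel-verified Lean document; each statement's English description precedes it below -/
import Mathlib

section
/- The hom-associative Weyl algebra A₁ᵏ has no zero divisors: for all a, b ∈ A₁, if a * b = 0 (i.e. α_k(a·b) = 0) then a = 0 or b = 0. -/
noncomputable section

/-- The defining relation of the first Weyl algebra: `x * y = y * x + 1`. -/
inductive WeylRel (K : Type*) [Field K] :
    FreeAlgebra K (Fin 2) → FreeAlgebra K (Fin 2) → Prop
  | comm : WeylRel K (FreeAlgebra.ι K 0 * FreeAlgebra.ι K 1)
      (FreeAlgebra.ι K 1 * FreeAlgebra.ι K 0 + 1)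

/-- The first Weyl algebra `A₁` over `K`: the free unital associative `K`-algebra on two
generators `x, y` modulo the relation `x·y − y·x = 1`. -/
abbrev Weyl (K : Type*) [Field K] := RingQuot (WeylRel K)

/-- The generator `x` of the first Weyl algebra. -/
def Wx (K : Type*) [Field K] : Weyl K :=
  RingQuot.mkAlgHom K (WeylRel K) (FreeAlgebra.ι K 0)

/-- The generator `y` of the first Weyl algebra. -/
def Wy (K : Type*) [Field K] : Weyl K :=
  RingQuot.mkAlgHom K (WeylRel K) (FreeAlgebra.ι K 1)

/-!
Let `A₁` act on `K[s][t]` by `x ↦ s + ∂/∂t` and `y ↦ t`. Then `y^m f(x)` sends `1` to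
`t^m f(s)`, so every element of `A₁` is of the form `∑ y^m f_m(x)`. Composed with `α`, the action
sends `x ↦ s + ∂/∂t` and `y ↦ Q(t)`, with `Q = t + ∑ k_i t^{ip}` nonconstant because `p ≠ 1`. The
operator `∑ Q^m f_m(s + ∂/∂t)` with top index `D` maps the leading `t`-coefficient `c` of `v ≠ 0`
to the coefficient `lc(Q)^D f_D(s) c ≠ 0` in degree `deg v + D deg Q`, so it kills no nonzero
vector. Hence `α(a) α(b) = α(ab) = 0` acts as zero only if `a = 0` or `b = 0`.
-/

open Polynomial

namespace Weyl

variable {K : Type*} [Field K]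

theorem Wx_mul_Wy : Wx K * Wy K = Wy K * Wx K + 1 := by
  simpa [Wx, Wy] using RingQuot.mkAlgHom_rel K (WeylRel.comm (K := K))

theorem Wx_mul_Wy_pow (m : ℕ) : Wx K * Wy K ^ m = Wy K ^ m * Wx K + m * Wy K ^ (m - 1) := by
  induction m with
  | zero => simp
  | succ m ih =>
    rcases m with _ | m
    · simpa using Wx_mul_Wy
    · rw [pow_succ, ← mul_assoc, ih, add_mul, mul_assoc, Wx_mul_Wy, Nat.add_sub_cancel,
        Nat.add_sub_cancel, mul_add, ← mul_assoc, ← pow_succ, mul_one, mul_assoc, ← pow_succ]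
      push_cast
      noncomm_ring

theorem induction_on {motive : Weyl K → Prop} (a : Weyl K)
    (algebraMap : ∀ r, motive (algebraMap K (Weyl K) r)) (x : motive (Wx K)) (y : motive (Wy K))
    (add : ∀ a b, motive a → motive b → motive (a + b))
    (mul : ∀ a b, motive a → motive b → motive (a * b)) : motive a := by
  obtain ⟨f, rfl⟩ := RingQuot.mkAlgHom_surjective K (WeylRel K) a
  induction f using FreeAlgebra.induction with
  | grade0 r => simpa using algebraMap r
  | grade1 i => fin_cases i; exacts [x, y]
  | mul f g hf hg => simpa using mul _ _ hf hg
  | add f g hf hg => simpa using add _ _ hf hg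

/-- On `K[s][t]` (the outer variable is `t`), `x` acts as `s + ∂/∂t` and `y` as multiplication by
`t`; the summand `s` keeps the action faithful although `(∂/∂t)^p = 0` in characteristic `p`. -/
def xOp : Module.End K K[X][X] :=
  Algebra.lmul K K[X][X] (C X) + (derivative : K[X][X] →ₗ[K[X]] K[X][X]).restrictScalars K

theorem xOp_apply (v : K[X][X]) : xOp v = C X * v + derivative v := rfl

theorem xOp_mul_lmul_X :
    xOp * Algebra.lmul K K[X][X] X = Algebra.lmul K K[X][X] X * xOp + 1 := by
  ext1 v
  simp only [Module.End.mul_apply, xOp_apply, Algebra.coe_lmul_eq_mul, LinearMap.mul_apply',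
    derivative_mul, derivative_X, LinearMap.add_apply, Module.End.one_apply]
  ring

def rep : Weyl K →ₐ[K] Module.End K K[X][X] :=
  RingQuot.liftAlgHom K ⟨FreeAlgebra.lift K ![xOp, Algebra.lmul K K[X][X] X], fun _ _ h => by
    cases h; simpa using xOp_mul_lmul_X⟩

theorem rep_Wx : rep (Wx K) = xOp := by
  simp [rep, Wx, RingQuot.liftAlgHom_mkAlgHom_apply]

theorem rep_Wy : rep (Wy K) = Algebra.lmul K K[X][X] X := by
  simp [rep, Wy, RingQuot.liftAlgHom_mkAlgHom_apply]

/-- The normal form `∑ t^m f_m(s) ↦ ∑ y^m f_m(x)`. -/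
def ofPoly : K[X][X] →ₗ[K] Weyl K :=
  lsum fun m => (LinearMap.mulLeft K (Wy K ^ m)).comp (aeval (Wx K)).toLinearMap

theorem ofPoly_monomial (m : ℕ) (f : K[X]) :
    ofPoly (monomial m f) = Wy K ^ m * aeval (Wx K) f := by
  simp [ofPoly]

theorem ofPoly_X_mul (F : K[X][X]) : ofPoly (X * F) = Wy K * ofPoly F := by
  induction F using Polynomial.induction_on' with
  | add F G hF hG => rw [mul_add, map_add, hF, hG, map_add, mul_add]
  | monomial m f => rw [X_mul_monomial, ofPoly_monomial, ofPoly_monomial, pow_succ', mul_assoc]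

theorem ofPoly_xOp (F : K[X][X]) : ofPoly (xOp F) = Wx K * ofPoly F := by
  induction F using Polynomial.induction_on' with
  | add F G hF hG => rw [map_add, map_add, hF, hG, map_add, mul_add]
  | monomial m f =>
    rw [xOp_apply, C_mul_monomial, derivative_monomial, map_add, ofPoly_monomial, ofPoly_monomial,
      ofPoly_monomial, ← mul_assoc, Wx_mul_Wy_pow]
    simp [add_mul, mul_assoc, Nat.cast_comm]

theorem ofPoly_rep_apply (a : Weyl K) (F : K[X][X]) : ofPoly (rep a F) = a * ofPoly F := by
  induction a using induction_on generalizing F with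
  | algebraMap r =>
    rw [AlgHom.commutes, Module.algebraMap_end_apply, map_smul, Algebra.smul_def]
  | x => rw [rep_Wx, ofPoly_xOp]
  | y => rw [rep_Wy, Algebra.coe_lmul_eq_mul, LinearMap.mul_apply', ofPoly_X_mul]
  | add a b ha hb => rw [map_add, LinearMap.add_apply, map_add, ha, hb, add_mul]
  | mul a b ha hb => rw [map_mul, Module.End.mul_apply, ha, hb, mul_assoc]

theorem ofPoly_surjective : Function.Surjective (ofPoly (K := K)) := fun a =>
  ⟨rep a 1, by rw [ofPoly_rep_apply, ← monomial_zero_one, ofPoly_monomial]; simp⟩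

theorem natDegree_xOp_apply_le (v : K[X][X]) : (xOp v).natDegree ≤ v.natDegree :=
  natDegree_add_le_of_degree_le (natDegree_C_mul_le _ _)
    ((natDegree_derivative_le v).trans (Nat.sub_le _ _))

theorem coeff_xOp_apply_of_natDegree_le {v : K[X][X]} {N : ℕ} (hv : v.natDegree ≤ N) :
    (xOp v).coeff N = X * v.coeff N := by
  rw [xOp_apply, coeff_add, coeff_C_mul, coeff_derivative,
    coeff_eq_zero_of_natDegree_lt (Nat.lt_succ_of_le hv), zero_mul, add_zero]

theorem natDegree_aeval_xOp_apply_le (g : K[X]) (v : K[X][X]) :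
    (aeval xOp g v).natDegree ≤ v.natDegree := by
  induction g using Polynomial.induction_on with
  | C a => simpa using natDegree_smul_le a v
  | add g h hg hh => simpa using natDegree_add_le_of_degree_le hg hh
  | monomial n a ih =>
    rw [pow_succ', mul_left_comm, map_mul, aeval_X, Module.End.mul_apply]
    exact (natDegree_xOp_apply_le _).trans ih

theorem coeff_aeval_xOp_apply_of_natDegree_le (g : K[X]) {v : K[X][X]} {N : ℕ}
    (hv : v.natDegree ≤ N) : (aeval xOp g v).coeff N = g * v.coeff N := by
  induction g using Polynomial.induction_on with
  | C a => simp [coeff_smul, smul_eq_C_mul]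
  | add g h hg hh => simp [hg, hh, add_mul]
  | monomial n a ih =>
    rw [pow_succ', mul_left_comm, map_mul, aeval_X, Module.End.mul_apply,
      coeff_xOp_apply_of_natDegree_le ((natDegree_aeval_xOp_apply_le _ v).trans hv), ih]
    ring

theorem apply_ofPoly_apply {Q : K[X][X]} {φ : Weyl K →ₐ[K] Module.End K K[X][X]}
    (hx : φ (Wx K) = xOp) (hy : φ (Wy K) = Algebra.lmul K K[X][X] Q) (F v : K[X][X]) :
    φ (ofPoly F) v = F.sum fun m f => Q ^ m * aeval xOp f v := by
  rw [ofPoly, lsum_apply, sum_def, sum_def, map_sum, LinearMap.sum_apply]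
  refine Finset.sum_congr rfl fun m _ => ?_
  rw [LinearMap.comp_apply, LinearMap.mulLeft_apply, AlgHom.toLinearMap_apply, map_mul, map_pow,
    ← aeval_algHom_apply, hx, hy, ← map_pow, Module.End.mul_apply, Algebra.coe_lmul_eq_mul,
    LinearMap.mul_apply']

theorem coeff_apply_ofPoly_apply {Q : K[X][X]} {φ : Weyl K →ₐ[K] Module.End K K[X][X]}
    (hx : φ (Wx K) = xOp) (hy : φ (Wy K) = Algebra.lmul K K[X][X] Q) (hQ : 0 < Q.natDegree)
    (F : K[X][X]) {v : K[X][X]} {N : ℕ} (hv : v.natDegree ≤ N) :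
    (φ (ofPoly F) v).coeff (F.natDegree * Q.natDegree + N) =
      Q.leadingCoeff ^ F.natDegree * (F.leadingCoeff * v.coeff N) := by
  rw [apply_ofPoly_apply hx hy, sum_def, finsetSum_coeff, Finset.sum_eq_single F.natDegree]
  · rw [coeff_mul_add_eq_of_natDegree_le natDegree_pow_le
      ((natDegree_aeval_xOp_apply_le _ v).trans hv), coeff_pow_of_natDegree_le le_rfl,
      coeff_aeval_xOp_apply_of_natDegree_le _ hv]
    rfl
  · intro m hm hne
    have hlt : m < F.natDegree := (le_natDegree_of_mem_supp m hm).lt_of_ne hne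
    refine coeff_eq_zero_of_natDegree_lt ?_
    calc (Q ^ m * aeval xOp (F.coeff m) v).natDegree ≤ m * Q.natDegree + N :=
          natDegree_mul_le_of_le natDegree_pow_le ((natDegree_aeval_xOp_apply_le _ v).trans hv)
      _ < F.natDegree * Q.natDegree + N := by gcongr
  · intro h
    rw [notMem_support_iff.mp h, map_zero, LinearMap.zero_apply, mul_zero, coeff_zero]

theorem apply_ne_zero {Q : K[X][X]} {φ : Weyl K →ₐ[K] Module.End K K[X][X]}
    (hx : φ (Wx K) = xOp) (hy : φ (Wy K) = Algebra.lmul K K[X][X] Q) (hQ : 0 < Q.natDegree)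
    {a : Weyl K} (ha : a ≠ 0) {v : K[X][X]} (hv : v ≠ 0) : φ a v ≠ 0 := by
  obtain ⟨F, rfl⟩ := ofPoly_surjective a
  have hF : F ≠ 0 := by rintro rfl; exact ha (map_zero _)
  intro h
  have htop := coeff_apply_ofPoly_apply hx hy hQ F le_rfl (v := v)
  rw [h, coeff_zero] at htop
  exact mul_ne_zero (pow_ne_zero _ (leadingCoeff_ne_zero.2 (ne_zero_of_natDegree_gt hQ)))
    (mul_ne_zero (leadingCoeff_ne_zero.2 hF) (leadingCoeff_ne_zero.2 hv)) htop.symm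

end Weyl

theorem homWeyl_no_zero_divisors_general (K : Type*) [Field K] (p : ℕ) (hp : p.Prime)
    (M : ℕ) (k : ℕ → K) (α : Weyl K →ₐ[K] Weyl K)
    (hx : α (Wx K) = Wx K)
    (hy : α (Wy K) = Wy K + ∑ i ∈ Finset.range (M + 1), k i • (Wy K) ^ (i * p)) :
    ∀ a b : Weyl K, α (a * b) = 0 → a = 0 ∨ b = 0 := by
  intro a b hab
  set Q : K[X][X] := X + ∑ i ∈ Finset.range (M + 1), k i • X ^ (i * p)
  have hQ : 0 < Q.natDegree := by
    have hQ1 : Q.coeff 1 = 1 := by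
      simp [Q, finsetSum_coeff, coeff_X, eq_comm (a := 1), mul_eq_one, hp.ne_one]
    exact le_natDegree_of_ne_zero (by rw [hQ1]; exact one_ne_zero)
  have hφx : (Weyl.rep.comp α) (Wx K) = Weyl.xOp := by rw [AlgHom.comp_apply, hx, Weyl.rep_Wx]
  have hφy : (Weyl.rep.comp α) (Wy K) = Algebra.lmul K K[X][X] Q := by
    simp only [AlgHom.comp_apply, hy, Q, map_add, map_sum, map_smul, map_pow, Weyl.rep_Wy]
  by_contra! h
  apply Weyl.apply_ne_zero hφx hφy hQ h.1 (Weyl.apply_ne_zero hφx hφy hQ h.2 one_ne_zero)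
  rw [← Module.End.mul_apply, ← map_mul, AlgHom.comp_apply, hab, map_zero, LinearMap.zero_apply]

/-- The hom-associative Weyl algebra `A₁ᵏ` (the Yau twist of `A₁` by `α_k`, with product
`a * b := α_k (a·b)`) has no zero divisors: if `α_k (a·b) = 0` then `a = 0` or `b = 0`. -/
theorem homWeyl_no_zero_divisors (K : Type*) [Field K] (p : ℕ) (hp : p.Prime) [CharP K p]
    (M : ℕ) (k : ℕ → K) (α : Weyl K →ₐ[K] Weyl K)
    (hx : α (Wx K) = Wx K)
    (hy : α (Wy K) = Wy K + ∑ i ∈ Finset.range (M + 1), k i • (Wy K) ^ (i * p)) :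
    ∀ a b : Weyl K, α (a * b) = 0 → a = 0 ∨ b = 0 :=
  homWeyl_no_zero_divisors_general K p hp M k α hx hy
end
end

section
/- The hom-associative Weyl algebra A₁ᵏ is power associative, i.e. (a * a) * a = a * (a * a) for all a ∈ A₁ where a * b := α_k(a·b), if and only if k = 0 (i.e. k₀ = k_p = k_{2p} = ⋯ = k_{Mp} = 0). -/
noncomputable section

/-!
Let `A₁` act on `K[X]` by `x ↦ d/dX + 1`, `y ↦ X`. Write `α(y) = P(y)` with
`P = X + ∑ kᵢ X^{ip}`; in characteristic `p` we have `P' = 1`, hence also `(P ∘ P)' = 1`.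
Evaluating the power associativity identity at `a = x·y` on `1 ∈ K[X]` yields
`(P ∘ P − P) (3 + 2 P ∘ P) = 0`. The second factor has derivative `2`, so it cannot vanish;
thus `(P − X) ∘ P = 0`, and as `P` is not constant, `P = X`, i.e. `k = 0`.
Conversely `k = 0` makes `α` the identity.
-/

open Polynomial

namespace Polynomial

variable {R : Type*} [CommRing R]

theorem three_add_two_mul_ne_zero [Nontrivial R] {g : R[X]} (hg : derivative g = 1) :
    3 + 2 * g ≠ 0 := by
  intro h
  have h2 : (2 : R[X]) = 0 := by simpa [hg] using congrArg derivative h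
  exact one_ne_zero (by linear_combination h - (g + 1) * h2 : (1 : R[X]) = 0)

theorem eq_X_of_comp_self_eq [IsDomain R] {P : R[X]} (hP : derivative P = 1)
    (h : P.comp P = P) : P = X := by
  have hPC : P ≠ C (P.coeff 0) := fun hC => by
    rw [hC, derivative_C] at hP
    exact zero_ne_one hP
  have : (P - X).comp P = 0 := by rw [sub_comp, h, X_comp, sub_self]
  simpa [sub_eq_zero, hPC] using comp_eq_zero_iff.mp this

theorem derivative_X_add_sum_smul_X_pow_mul (p : ℕ) [CharP R p] (s : Finset ℕ) (k : ℕ → R) :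
    derivative (X + ∑ i ∈ s, k i • X ^ (i * p) : R[X]) = 1 := by
  simp [derivative_X_pow]

theorem X_add_sum_smul_X_pow_mul_eq_X_iff {p : ℕ} (hp : p ≠ 0) (s : Finset ℕ) (k : ℕ → R) :
    X + ∑ i ∈ s, k i • X ^ (i * p) = (X : R[X]) ↔ ∀ i ∈ s, k i = 0 := by
  rw [add_eq_left]
  refine ⟨fun h i hi => ?_, fun h => Finset.sum_eq_zero fun i hi => by simp [h i hi]⟩
  simpa [finsetSum_coeff, coeff_X_pow, hp, hi] using congrArg (coeff · (i * p)) h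

end Polynomial

namespace Weyl

variable {K : Type*} [Field K]

section lift

variable {A : Type*} [Semiring A] [Algebra K A]

theorem algHom_ext {φ ψ : Weyl K →ₐ[K] A} (hx : φ (Wx K) = ψ (Wx K))
    (hy : φ (Wy K) = ψ (Wy K)) : φ = ψ := by
  refine RingQuot.ringQuot_ext' _ _ _ (FreeAlgebra.hom_ext (funext fun i => ?_))
  fin_cases i
  exacts [hx, hy]

def lift (a b : A) (h : a * b = b * a + 1) : Weyl K →ₐ[K] A :=
  RingQuot.liftAlgHom K ⟨FreeAlgebra.lift K ![a, b], by
    rintro _ _ ⟨⟩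
    simpa using h⟩

@[simp]
theorem lift_Wx {a b : A} (h : a * b = b * a + 1) : lift a b h (Wx K) = a := by
  simp [lift, Wx, RingQuot.liftAlgHom_mkAlgHom_apply]

@[simp]
theorem lift_Wy {a b : A} (h : a * b = b * a + 1) : lift a b h (Wy K) = b := by
  simp [lift, Wy, RingQuot.liftAlgHom_mkAlgHom_apply]

end lift

/-- The shift by `1` matters: with `x ↦ d/dX` alone, the identity evaluated in
`comp_self_eq_of_powerAssoc` would hold trivially on `1`. -/
def polyRep : Weyl K →ₐ[K] Module.End K K[X] :=
  lift (derivative + 1) (Algebra.lmul K K[X] X) <| LinearMap.ext fun v => by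
    simp [derivative_mul]
    ring

theorem polyRep_Wx_mul_aeval_Wy_apply (q v : K[X]) :
    polyRep (Wx K * aeval (Wy K) q) v = derivative (q * v) + q * v := by
  rw [map_mul, ← aeval_algHom_apply, polyRep, lift_Wx, lift_Wy, aeval_algHom_apply,
    aeval_X_left_apply]
  rfl

variable {α : Weyl K →ₐ[K] Weyl K} {P : K[X]}

theorem comp_self_eq_of_powerAssoc (hx : α (Wx K) = Wx K) (hy : α (Wy K) = aeval (Wy K) P)
    (hP : derivative P = 1) (h : ∀ a, α (α (a * a) * a) = α (a * α (a * a))) :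
    P.comp P = P := by
  set T : K[X] → Weyl K := fun q => Wx K * aeval (Wy K) q
  have hα : ∀ q, α (T q) = T (q.comp P) := fun q => by
    rw [map_mul, hx, ← aeval_algHom_apply, hy, ← aeval_comp]
  have hT : ∀ q v, polyRep (T q) v = derivative (q * v) + q * v :=
    polyRep_Wx_mul_aeval_Wy_apply
  have hPP : derivative (P.comp P) = 1 := by simp [derivative_comp, hP]
  have h1 := congrArg (polyRep · (1 : K[X])) (h (T X))
  simp only [map_mul, hα, X_comp, Module.End.mul_apply, hT, derivative_mul, derivative_add,
    hP, hPP, derivative_one, derivative_zero] at h1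
  have hfactor : (P.comp P - P) * (3 + 2 * P.comp P) = 0 := by linear_combination h1
  exact sub_eq_zero.mp ((mul_eq_zero.mp hfactor).resolve_right (three_add_two_mul_ne_zero hPP))

theorem powerAssoc_iff_eq_X (hx : α (Wx K) = Wx K) (hy : α (Wy K) = aeval (Wy K) P)
    (hP : derivative P = 1) :
    (∀ a, α (α (a * a) * a) = α (a * α (a * a))) ↔ P = X := by
  refine ⟨fun h => eq_X_of_comp_self_eq hP (comp_self_eq_of_powerAssoc hx hy hP h),
    fun hPX a => ?_⟩
  have hid : α = AlgHom.id K (Weyl K) := algHom_ext hx (by simpa [hPX] using hy)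
  simp [hid, mul_assoc]

end Weyl

/-- The hom-associative Weyl algebra `A₁ᵏ` (the Yau twist of `A₁` by `α_k`, with product
`a * b := α_k (a·b)`) is power associative, i.e. `(a * a) * a = a * (a * a)` for all `a`,
if and only if `k = 0` (all of `k₀, k_p, …, k_{Mp}` are zero). -/
theorem homWeyl_power_associative_iff (K : Type*) [Field K] (p : ℕ) (hp : p.Prime)
    [CharP K p] (M : ℕ) (k : ℕ → K) (α : Weyl K →ₐ[K] Weyl K)
    (hx : α (Wx K) = Wx K)
    (hy : α (Wy K) = Wy K + ∑ i ∈ Finset.range (M + 1), k i • (Wy K) ^ (i * p)) :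
    (∀ a : Weyl K, α (α (a * a) * a) = α (a * α (a * a))) ↔
      ∀ i ∈ Finset.range (M + 1), k i = 0 := by
  have hαy : α (Wy K) =
      aeval (Wy K) (X + ∑ i ∈ Finset.range (M + 1), k i • X ^ (i * p) : K[X]) := by
    simp [hy]
  rw [Weyl.powerAssoc_iff_eq_X hx hαy (derivative_X_add_sum_smul_X_pow_mul p _ k),
    X_add_sum_smul_X_pow_mul_eq_X_iff hp.ne_zero]
end
end
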